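/- arXiv:2001.07251 — 3 statements merged into one kernel-verified Lean document; each statement's English description precedes it below -/
import Mathlib

section
/- Let μ ∈ ℂ, s > 0 with s < |μ|, n ∈ ℕ, and let (y_k)_{0 ≤ k ≤ n} and (E_k)_{0 ≤ k ≤ n−1} be complex numbers with y_{k+1} = (μ + E_k)·y_k and |E_k| ≤ s for all 0 ≤ k ≤ n−1. Then for every 0 ≤ k ≤ n one has |y_k| ≤ |μ|^{−(n−k)} · |y_n| · exp( (1/(|μ| − s)) · Σ_{i=k}^{n−1} |E_i| ). -/
/-!
Since `‖μ + E‖ ≥ ‖μ‖ - ‖E‖`, each backward step costs a factor `‖μ‖ / (‖μ‖ - ‖E‖)`, and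
`‖μ‖ / (‖μ‖ - e) = 1 + e / (‖μ‖ - e) ≤ 1 + e / (‖μ‖ - s) ≤ exp (e / (‖μ‖ - s))` for `e ≤ s`.
Multiplying these factors along the recursion turns the product into the exponential of a sum.
-/

lemma le_exp_div_mul_sub {M s e : ℝ} (he : 0 ≤ e) (hes : e ≤ s) (hsM : s < M) :
    M ≤ Real.exp (e / (M - s)) * (M - e) := by
  have hMs : 0 < M - s := by linarith
  have hgain : e ≤ e / (M - s) * (M - e) := by
    rw [div_mul_eq_mul_div, le_div_iff₀ hMs]
    exact mul_le_mul_of_nonneg_left (by linarith) he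
  calc M ≤ (1 + e / (M - s)) * (M - e) := by rw [add_mul, one_mul]; linarith
    _ ≤ Real.exp (e / (M - s)) * (M - e) := by
      gcongr
      · linarith
      · linarith [Real.add_one_le_exp (e / (M - s))]

section

variable {𝕜 : Type*} [NormedDivisionRing 𝕜]

lemma norm_mul_norm_le_exp_mul_norm_add_mul {μ e : 𝕜} (y : 𝕜) {s : ℝ} (he : ‖e‖ ≤ s)
    (hsμ : s < ‖μ‖) : ‖μ‖ * ‖y‖ ≤ Real.exp (‖e‖ / (‖μ‖ - s)) * ‖(μ + e) * y‖ := by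
  rw [norm_mul, ← mul_assoc]
  gcongr
  calc ‖μ‖ ≤ Real.exp (‖e‖ / (‖μ‖ - s)) * (‖μ‖ - ‖e‖) := le_exp_div_mul_sub (norm_nonneg e) he hsμ
    _ ≤ Real.exp (‖e‖ / (‖μ‖ - s)) * ‖μ + e‖ := by gcongr; exact norm_sub_le_norm_add μ e

theorem norm_pow_mul_norm_le_exp_mul_norm_of_recursion {μ : 𝕜} {s : ℝ} {n : ℕ} {y E : ℕ → 𝕜}
    (hsμ : s < ‖μ‖) (hrec : ∀ k < n, y (k + 1) = (μ + E k) * y k)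
    (hE : ∀ k < n, ‖E k‖ ≤ s) {k : ℕ} (hk : k ≤ n) :
    ‖μ‖ ^ (n - k) * ‖y k‖ ≤ Real.exp ((∑ i ∈ Finset.Ico k n, ‖E i‖) / (‖μ‖ - s)) * ‖y n‖ := by
  induction hk using Nat.decreasingInduction with
  | self => simp
  | of_succ k hkn ih =>
    have hstep := norm_mul_norm_le_exp_mul_norm_add_mul (y k) (hE k hkn) hsμ
    rw [← hrec k hkn] at hstep
    calc ‖μ‖ ^ (n - k) * ‖y k‖ = ‖μ‖ ^ (n - (k + 1)) * (‖μ‖ * ‖y k‖) := by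
          rw [← mul_assoc, ← pow_succ, show n - (k + 1) + 1 = n - k by omega]
      _ ≤ ‖μ‖ ^ (n - (k + 1)) * (Real.exp (‖E k‖ / (‖μ‖ - s)) * ‖y (k + 1)‖) := by gcongr
      _ = Real.exp (‖E k‖ / (‖μ‖ - s)) * (‖μ‖ ^ (n - (k + 1)) * ‖y (k + 1)‖) := by ring
      _ ≤ Real.exp (‖E k‖ / (‖μ‖ - s)) *
            (Real.exp ((∑ i ∈ Finset.Ico (k + 1) n, ‖E i‖) / (‖μ‖ - s)) * ‖y n‖) := by gcongr
      _ = Real.exp ((∑ i ∈ Finset.Ico k n, ‖E i‖) / (‖μ‖ - s)) * ‖y n‖ := by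
        rw [Finset.sum_eq_sum_Ico_succ_bot hkn, add_div, Real.exp_add, mul_assoc]

end

/-- refined multiplicative backward estimate
`|y_k| ≤ |μ|^{-(n-k)} |y_n| exp((1/(|μ|−s)) Σ_{i=k}^{n-1} |E_i|)` for the recursion
`y_{k+1} = (μ + E_k) y_k` with `|E_k| ≤ s < |μ|`. -/
theorem stmt_8 (mu : ℂ) (s : ℝ) (hs : 0 < s) (hsmu : s < ‖mu‖) (n : ℕ) (y E : ℕ → ℂ)
    (hrec : ∀ k, k < n → y (k + 1) = (mu + E k) * y k)
    (hE : ∀ k, k < n → ‖E k‖ ≤ s) :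
    ∀ k, k ≤ n →
      ‖y k‖ ≤ (‖mu‖ ^ (n - k))⁻¹ * ‖y n‖ *
        Real.exp ((1 / (‖mu‖ - s)) * ∑ i ∈ Finset.Ico k n, ‖E i‖) := by
  intro k hk
  have hpow : 0 < ‖mu‖ ^ (n - k) := pow_pos (hs.trans hsmu) _
  rw [one_div_mul_eq_div, mul_assoc, inv_mul_eq_div, le_div_iff₀ hpow, mul_comm (‖y k‖)]
  simpa only [mul_comm (‖y n‖)] using
    norm_pow_mul_norm_le_exp_mul_norm_of_recursion hsmu hrec hE hk
end

section
/- Let λ, μ ∈ ℂ with 0 < |λ| < 1 < |μ|, let M > 0, and let s satisfy 0 < s < min{1/2, |μ| − 1, 1 − |λ|}. Then there exists a constant C > 0, depending only on λ, μ, M, s, such that the following holds for every n ∈ ℕ: if (x_k)_{0 ≤ k ≤ n}, (y_k)_{0 ≤ k ≤ n}, (D_k)_{0 ≤ k ≤ n−1}, (E_k)_{0 ≤ k ≤ n−1} are complex numbers with |x₀| ≤ 1, |y_n| ≤ 1, x_{k+1} = (λ + D_k)·x_k, y_{k+1} = (μ + E_k)·y_k, |D_k| ≤ min(s, M|y_k|),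 and |E_k| ≤ min(s, M|x_k|) for all 0 ≤ k ≤ n−1, then |x_k| ≤ C·|λ|^k and |y_k| ≤ C·|μ|^{−(n−k)} for all 0 ≤ k ≤ n. -/
private lemma geom_aux {r : ℝ} (h0 : 0 ≤ r) (h1 : r < 1) (k : ℕ) :
    ∑ i ∈ Finset.range k, r ^ i ≤ (1 - r)⁻¹ := by
  have h2 : 0 < 1 - r := by linarith
  rw [geom_sum_eq h1.ne]
  have hrk : 0 ≤ r ^ k := pow_nonneg h0 k
  rw [div_le_iff_of_neg (by linarith : r - 1 < 0)]
  have h3 : (1 - r)⁻¹ * (1 - r) = 1 := inv_mul_cancel₀ h2.ne'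
  nlinarith [h3]

private lemma exp_neg_two_le {t : ℝ} (h0 : 0 ≤ t) (h1 : t ≤ 1 / 2) :
    Real.exp (-(2 * t)) ≤ 1 - t := by
  rw [Real.exp_neg, inv_eq_one_div, div_le_iff₀ (Real.exp_pos _)]
  nlinarith [Real.add_one_le_exp (2 * t), Real.exp_pos (2 * t)]

/-- Lemma 3.2 in coordinates. Along a coupled perturbed linear orbit with
`|D_k| ≤ min(s, M|y_k|)` and `|E_k| ≤ min(s, M|x_k|)`, one has `x_k = O(|λ|^k)` and
`y_k = O(|μ|^{-(n-k)})`, with a constant uniform in `n`. -/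
theorem stmt_9 (lam mu : ℂ) (hlam0 : 0 < ‖lam‖) (hlam1 : ‖lam‖ < 1) (hmu : 1 < ‖mu‖)
    (M : ℝ) (hM : 0 < M) (s : ℝ) (hs0 : 0 < s)
    (hs : s < min (1 / 2) (min (‖mu‖ - 1) (1 - ‖lam‖))) :
    ∃ C : ℝ, 0 < C ∧
      ∀ (n : ℕ) (x y D E : ℕ → ℂ),
        ‖x 0‖ ≤ 1 → ‖y n‖ ≤ 1 →
        (∀ k, k < n → x (k + 1) = (lam + D k) * x k) →
        (∀ k, k < n → y (k + 1) = (mu + E k) * y k) →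
        (∀ k, k < n → ‖D k‖ ≤ min s (M * ‖y k‖)) →
        (∀ k, k < n → ‖E k‖ ≤ min s (M * ‖x k‖)) →
        ∀ k, k ≤ n →
          ‖x k‖ ≤ C * ‖lam‖ ^ k ∧ ‖y k‖ ≤ C * (‖mu‖ ^ (n - k))⁻¹ := by
  set a : ℝ := ‖lam‖ with ha
  set b : ℝ := ‖mu‖ with hb
  have hs2 : s < 1 / 2 := lt_of_lt_of_le hs (min_le_left _ _)
  have hsb : s < b - 1 := lt_of_lt_of_le hs (le_trans (min_le_right _ _) (min_le_left _ _))
  have hsa : s < 1 - a := lt_of_lt_of_le hs (le_trans (min_le_right _ _) (min_le_right _ _))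
  set ρ : ℝ := a + s with hρ
  set σ : ℝ := b - s with hσ
  have hρ0 : 0 < ρ := by positivity
  have hρ1 : ρ < 1 := by simp only [hρ]; linarith
  have hσ1 : 1 < σ := by simp only [hσ]; linarith
  have hσ0 : 0 < σ := by linarith
  have hb0 : 0 < b := by linarith
  have hσinv0 : 0 ≤ σ⁻¹ := by positivity
  have hσinv1 : σ⁻¹ < 1 := by rw [inv_lt_one_iff₀]; right; exact hσ1
  set Cx : ℝ := Real.exp (M / a * (1 - σ⁻¹)⁻¹) with hCx
  set Cy : ℝ := Real.exp (2 * M / b * (1 - ρ)⁻¹) with hCy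
  refine ⟨max Cx Cy, lt_of_lt_of_le (Real.exp_pos _) (le_max_left _ _), ?_⟩
  intro n x y D E hx0 hyn hxrec hyrec hD hE
  -- crude bound on x
  have crudex : ∀ k, k ≤ n → ‖x k‖ ≤ ρ ^ k := by
    intro k
    induction k with
    | zero => intro _; simpa using hx0
    | succ k ih =>
      intro hk
      have hkn : k < n := by omega
      have h1 : ‖x (k + 1)‖ ≤ ρ * ‖x k‖ := by
        rw [hxrec k hkn, norm_mul]
        have h2 : ‖lam + D k‖ ≤ ρ := by
          calc ‖lam + D k‖ ≤ a + ‖D k‖ := norm_add_le _ _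
            _ ≤ a + s := by
                have := le_trans (hD k hkn) (min_le_left _ _); linarith
        exact mul_le_mul_of_nonneg_right h2 (norm_nonneg _)
      calc ‖x (k + 1)‖ ≤ ρ * ‖x k‖ := h1
        _ ≤ ρ * ρ ^ k := mul_le_mul_of_nonneg_left (ih (by omega)) hρ0.le
        _ = ρ ^ (k + 1) := by ring
  -- crude bound on y (backwards)
  have crudey : ∀ m, ∀ k, k + m = n → ‖y k‖ ≤ (σ ^ m)⁻¹ := by
    intro m
    induction m with
    | zero => intro k hk; simp only [Nat.add_zero] at hk; subst hk; simpa using hyn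
    | succ m ih =>
      intro k hk
      have hkn : k < n := by omega
      have h1 : σ * ‖y k‖ ≤ ‖y (k + 1)‖ := by
        rw [hyrec k hkn, norm_mul]
        have hEk : ‖E k‖ ≤ s := le_trans (hE k hkn) (min_le_left _ _)
        have h2 : σ ≤ ‖mu + E k‖ := by
          have h3 : b - ‖E k‖ ≤ ‖mu + E k‖ := by
            have h4 := norm_sub_le (mu + E k) (E k)
            rw [add_sub_cancel_right] at h4
            linarith
          simp only [hσ]; linarith
        exact mul_le_mul_of_nonneg_right h2 (norm_nonneg _)
      have h2 : ‖y (k + 1)‖ ≤ (σ ^ m)⁻¹ := ih (k + 1) (by omega)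
      have h3 : σ * ‖y k‖ ≤ (σ ^ m)⁻¹ := le_trans h1 h2
      rw [← le_div_iff₀' hσ0] at h3
      calc ‖y k‖ ≤ (σ ^ m)⁻¹ / σ := h3
        _ = (σ ^ (m + 1))⁻¹ := by rw [pow_succ, mul_inv, div_eq_mul_inv]
  have crudey' : ∀ k, k ≤ n → ‖y k‖ ≤ (σ ^ (n - k))⁻¹ := fun k hk =>
    crudey (n - k) k (by omega)
  -- refined bound on x
  have refx : ∀ k, k ≤ n →
      ‖x k‖ ≤ a ^ k * Real.exp (M / a * ∑ j ∈ Finset.range k, (σ ^ (n - j))⁻¹) := by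
    intro k
    induction k with
    | zero => intro _; simpa using hx0
    | succ k ih =>
      intro hk
      have hkn : k < n := by omega
      have hDk : ‖D k‖ ≤ M * (σ ^ (n - k))⁻¹ := by
        have h1 := le_trans (hD k hkn) (min_le_right _ _)
        have h2 := crudey' k (by omega)
        nlinarith [norm_nonneg (D k), norm_nonneg (y k)]
      have hstep : ‖lam + D k‖ ≤ a * Real.exp (M / a * (σ ^ (n - k))⁻¹) := by
        have h1 : ‖lam + D k‖ ≤ a + ‖D k‖ := norm_add_le _ _
        have h2 : a + ‖D k‖ ≤ a * Real.exp (‖D k‖ / a) := by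
          have h3 := Real.add_one_le_exp (‖D k‖ / a)
          have h4 : a * (‖D k‖ / a + 1) ≤ a * Real.exp (‖D k‖ / a) :=
            mul_le_mul_of_nonneg_left h3 hlam0.le
          have h5 : a * (‖D k‖ / a + 1) = ‖D k‖ + a := by field_simp
          linarith
        have h5 : Real.exp (‖D k‖ / a) ≤ Real.exp (M / a * (σ ^ (n - k))⁻¹) := by
          apply Real.exp_le_exp.mpr
          calc ‖D k‖ / a = ‖D k‖ * a⁻¹ := div_eq_mul_inv _ _
            _ ≤ (M * (σ ^ (n - k))⁻¹) * a⁻¹ :=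
                mul_le_mul_of_nonneg_right hDk (by positivity)
            _ = M / a * (σ ^ (n - k))⁻¹ := by ring
        calc ‖lam + D k‖ ≤ a + ‖D k‖ := h1
          _ ≤ a * Real.exp (‖D k‖ / a) := h2
          _ ≤ a * Real.exp (M / a * (σ ^ (n - k))⁻¹) :=
              mul_le_mul_of_nonneg_left h5 hlam0.le
      rw [hxrec k hkn, norm_mul]
      calc ‖lam + D k‖ * ‖x k‖
          ≤ (a * Real.exp (M / a * (σ ^ (n - k))⁻¹)) *
            (a ^ k * Real.exp (M / a * ∑ j ∈ Finset.range k, (σ ^ (n - j))⁻¹)) :=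
            mul_le_mul hstep (ih (by omega)) (norm_nonneg _) (by positivity)
        _ = a ^ (k + 1) * Real.exp (M / a *
              ((∑ j ∈ Finset.range k, (σ ^ (n - j))⁻¹) + (σ ^ (n - k))⁻¹)) := by
            rw [mul_add, Real.exp_add]; ring
        _ = a ^ (k + 1) * Real.exp (M / a * ∑ j ∈ Finset.range (k + 1), (σ ^ (n - j))⁻¹) := by
            rw [Finset.sum_range_succ]
  -- refined bound on y
  have refy : ∀ m, ∀ k, k + m = n →
      ‖y k‖ ≤ (b ^ m)⁻¹ * Real.exp (2 * M / b * ∑ j ∈ Finset.range m, ρ ^ (k + j)) := by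
    intro m
    induction m with
    | zero =>
      intro k hk; simp only [Nat.add_zero] at hk; subst hk
      simpa using hyn
    | succ m ih =>
      intro k hk
      have hkn : k < n := by omega
      have hEk : ‖E k‖ ≤ M * ρ ^ k := by
        have h1 := le_trans (hE k hkn) (min_le_right _ _)
        have h2 := crudex k (by omega)
        nlinarith [norm_nonneg (E k), norm_nonneg (x k)]
      have hEks : ‖E k‖ ≤ s := le_trans (hE k hkn) (min_le_left _ _)
      have ht0 : 0 ≤ ‖E k‖ / b := by positivity
      have ht1 : ‖E k‖ / b ≤ 1 / 2 := by
        rw [div_le_div_iff₀ hb0 (by norm_num)]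
        nlinarith
      have hlow : b * Real.exp (-(2 * (‖E k‖ / b))) ≤ ‖mu + E k‖ := by
        have h1 : b - ‖E k‖ ≤ ‖mu + E k‖ := by
          have h4 := norm_sub_le (mu + E k) (E k)
          rw [add_sub_cancel_right] at h4
          linarith
        have h2 : Real.exp (-(2 * (‖E k‖ / b))) ≤ 1 - ‖E k‖ / b :=
          exp_neg_two_le ht0 ht1
        have h3 : b * Real.exp (-(2 * (‖E k‖ / b))) ≤ b * (1 - ‖E k‖ / b) :=
          mul_le_mul_of_nonneg_left h2 hb0.le
        have h4 : b * (1 - ‖E k‖ / b) = b - ‖E k‖ := by field_simp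
        linarith
      set c : ℝ := b * Real.exp (-(2 * (‖E k‖ / b))) with hc
      have hc0 : 0 < c := by positivity
      have hstep : c * ‖y k‖ ≤ ‖y (k + 1)‖ := by
        rw [hyrec k hkn, norm_mul]
        exact mul_le_mul_of_nonneg_right hlow (norm_nonneg _)
      have hIH : ‖y (k + 1)‖ ≤
          (b ^ m)⁻¹ * Real.exp (2 * M / b * ∑ j ∈ Finset.range m, ρ ^ (k + 1 + j)) :=
        ih (k + 1) (by omega)
      have h5 : ‖y k‖ ≤
          ((b ^ m)⁻¹ * Real.exp (2 * M / b * ∑ j ∈ Finset.range m, ρ ^ (k + 1 + j))) / c :=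
        (le_div_iff₀' hc0).mpr (hstep.trans hIH)
      have hcinv : c⁻¹ = b⁻¹ * Real.exp (2 * (‖E k‖ / b)) := by
        rw [hc, mul_inv, ← Real.exp_neg, neg_neg]
      have hexpE : Real.exp (2 * (‖E k‖ / b)) ≤ Real.exp (2 * M / b * ρ ^ k) := by
        apply Real.exp_le_exp.mpr
        calc 2 * (‖E k‖ / b) = (2 * ‖E k‖) * b⁻¹ := by ring
          _ ≤ (2 * (M * ρ ^ k)) * b⁻¹ :=
              mul_le_mul_of_nonneg_right (by linarith) (by positivity)
          _ = 2 * M / b * ρ ^ k := by ring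
      have hsum : ∑ j ∈ Finset.range (m + 1), ρ ^ (k + j) =
          ρ ^ k + ∑ j ∈ Finset.range m, ρ ^ (k + 1 + j) := by
        rw [Finset.sum_range_succ']
        have h6 : ∑ j ∈ Finset.range m, ρ ^ (k + (j + 1)) =
            ∑ j ∈ Finset.range m, ρ ^ (k + 1 + j) :=
          Finset.sum_congr rfl fun j _ => by rw [show k + (j + 1) = k + 1 + j from by omega]
        rw [h6, add_comm]
        simp
      calc ‖y k‖ ≤
          ((b ^ m)⁻¹ * Real.exp (2 * M / b * ∑ j ∈ Finset.range m, ρ ^ (k + 1 + j))) / c := h5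
        _ = (b ^ m)⁻¹ * Real.exp (2 * M / b * ∑ j ∈ Finset.range m, ρ ^ (k + 1 + j)) *
            (b⁻¹ * Real.exp (2 * (‖E k‖ / b))) := by rw [div_eq_mul_inv, hcinv]
        _ ≤ (b ^ m)⁻¹ * Real.exp (2 * M / b * ∑ j ∈ Finset.range m, ρ ^ (k + 1 + j)) *
            (b⁻¹ * Real.exp (2 * M / b * ρ ^ k)) := by
            apply mul_le_mul_of_nonneg_left
              (mul_le_mul_of_nonneg_left hexpE (by positivity)) (by positivity)
        _ = (b ^ (m + 1))⁻¹ * Real.exp (2 * M / b *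
              (ρ ^ k + ∑ j ∈ Finset.range m, ρ ^ (k + 1 + j))) := by
            rw [pow_succ, mul_inv, mul_add, Real.exp_add]; ring
        _ = (b ^ (m + 1))⁻¹ *
            Real.exp (2 * M / b * ∑ j ∈ Finset.range (m + 1), ρ ^ (k + j)) := by
            rw [hsum]
  -- conclusion
  intro k hk
  constructor
  · have hsumx : ∑ j ∈ Finset.range k, (σ ^ (n - j))⁻¹ ≤ (1 - σ⁻¹)⁻¹ := by
      calc ∑ j ∈ Finset.range k, (σ ^ (n - j))⁻¹
          ≤ ∑ j ∈ Finset.range k, σ⁻¹ ^ (k - 1 - j) := by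
            apply Finset.sum_le_sum
            intro j hj
            rw [← inv_pow]
            have hjk : j < k := Finset.mem_range.mp hj
            exact pow_le_pow_of_le_one hσinv0 hσinv1.le (by omega)
        _ = ∑ j ∈ Finset.range k, σ⁻¹ ^ j := Finset.sum_range_reflect _ k
        _ ≤ (1 - σ⁻¹)⁻¹ := geom_aux hσinv0 hσinv1 k
    calc ‖x k‖ ≤ a ^ k * Real.exp (M / a * ∑ j ∈ Finset.range k, (σ ^ (n - j))⁻¹) :=
          refx k hk
      _ ≤ a ^ k * Cx := by
          apply mul_le_mul_of_nonneg_left _ (by positivity)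
          exact Real.exp_le_exp.mpr (mul_le_mul_of_nonneg_left hsumx (by positivity))
      _ ≤ max Cx Cy * a ^ k := by
          rw [mul_comm]
          exact mul_le_mul_of_nonneg_right (le_max_left _ _) (by positivity)
  · have hsumy : ∑ j ∈ Finset.range (n - k), ρ ^ (k + j) ≤ (1 - ρ)⁻¹ := by
      calc ∑ j ∈ Finset.range (n - k), ρ ^ (k + j)
          ≤ ∑ j ∈ Finset.range (n - k), ρ ^ j := by
            apply Finset.sum_le_sum
            intro j _
            exact pow_le_pow_of_le_one hρ0.le hρ1.le (by omega)
        _ ≤ (1 - ρ)⁻¹ := geom_aux hρ0.le hρ1 (n - k)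
    calc ‖y k‖ ≤ (b ^ (n - k))⁻¹ *
          Real.exp (2 * M / b * ∑ j ∈ Finset.range (n - k), ρ ^ (k + j)) :=
          refy (n - k) k (by omega)
      _ ≤ (b ^ (n - k))⁻¹ * Cy := by
          apply mul_le_mul_of_nonneg_left _ (by positivity)
          exact Real.exp_le_exp.mpr (mul_le_mul_of_nonneg_left hsumy (by positivity))
      _ ≤ max Cx Cy * (b ^ (n - k))⁻¹ := by
          rw [mul_comm]
          exact mul_le_mul_of_nonneg_right (le_max_right _ _) (by positivity)
end

section
/- Let λ, μ ∈ ℂ with 0 < |λ| < 1 < |μ|, and let F = (F₁, F₂) be holomorphic on the open polydisk 𝔻 × 𝔻 ⊂ ℂ² with F(x,0) = (λx, 0) and F(0,y) = (0, μy) for all x, y ∈ 𝔻. Then there exist r ∈ (0,1) and a constant C > 0 such that for every n ∈ ℕ the following holds: if (p_k)_{0 ≤ k ≤ n} is a sequence of points of the polydisk {|x| ≤ r} × {|y| ≤ r} with p_{k+1} = F(p_k) for 0 ≤ k ≤ n−1, and p_k = (x_k, y_k), then |x_k| ≤ C·|λ|^k and |y_k| ≤ C·|μ|^{−(n−k)}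 for all 0 ≤ k ≤ n. -/
/-!
Writing `F = (λx, μy) + G`, the remainder `G` vanishes on both axes, so two applications of the
one-variable Schwarz lemma give `‖G (x, y)‖ ≤ M |x| |y|` near the origin. Along an orbit in the
polydisk of radius `r` this yields `|x_{k+1}| ≤ (|λ| + M |y_k|) |x_k|` and
`(|μ| - M |x_k|) |y_k| ≤ |y_{k+1}|`. For `M r` small these first give crude geometric bounds
`|x_k| ≤ r (|λ| + M r)^k` and `|y_k| ≤ r (|μ| - M r)^{-(n-k)}`. Fed back into the recursions, they
show that the multipliers differ from `|λ|` and `|μ|⁻¹` by factors `1 + O(θ^{n-k})` resp.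
`1 + O(θ^k)` with `θ < 1`, whose products are bounded independently of `n`.
-/

open Metric Set Real

theorem norm_le_div_div_mul_of_eq_zero_on_axes {E : Type*} [NormedAddCommGroup E]
    [NormedSpace ℂ E] {G : ℂ × ℂ → E} {R K : ℝ} (hd : DifferentiableOn ℂ G (ball 0 R))
    (hx : ∀ x : ℂ, ‖x‖ < R → G (x, 0) = 0) (hy : ∀ y : ℂ, ‖y‖ < R → G (0, y) = 0)
    (hK : MapsTo G (ball 0 R) (closedBall 0 K)) {p : ℂ × ℂ} (hp : p ∈ ball 0 R) :
    ‖G p‖ ≤ K / R / R * (‖p.1‖ * ‖p.2‖) := by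
  have mem : ∀ {x y : ℂ}, (x, y) ∈ ball (0 : ℂ × ℂ) R ↔ x ∈ ball 0 R ∧ y ∈ ball 0 R := by
    intro x y
    rw [← Prod.mk_zero_zero, ← ball_prod_same]
    rfl
  have schwarz : ∀ {f : ℂ → E} {S : ℝ}, DifferentiableOn ℂ f (ball 0 R) → f 0 = 0 →
      MapsTo f (ball 0 R) (closedBall 0 S) → ∀ z ∈ ball (0 : ℂ) R, ‖f z‖ ≤ S / R * ‖z‖ := by
    intro f S hf hf0 hfS z hz
    simpa [hf0] using Complex.dist_le_div_mul_dist_of_mapsTo_ball hf (hf0 ▸ hfS) hz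
  obtain ⟨x, y⟩ := p
  obtain ⟨hxR, hyR⟩ := mem.1 hp
  have slice_fst : ∀ y ∈ ball (0 : ℂ) R, ∀ x ∈ ball (0 : ℂ) R, ‖G (x, y)‖ ≤ K / R * ‖x‖ := by
    intro y hy'
    exact schwarz (hd.comp (differentiableOn_id.prodMk (differentiableOn_const y))
      fun z hz => mem.2 ⟨hz, hy'⟩) (hy y (mem_ball_zero_iff.1 hy')) fun z hz => hK (mem.2 ⟨hz, hy'⟩)
  have := schwarz (f := fun w => G (x, w))
    (hd.comp ((differentiableOn_const x).prodMk differentiableOn_id) fun w hw => mem.2 ⟨hxR, hw⟩)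
    (hx x (mem_ball_zero_iff.1 hxR))
    (fun w hw => mem_closedBall_zero_iff.2 (slice_fst w hw x hxR)) y hyR
  calc ‖G (x, y)‖ ≤ K / R * ‖x‖ / R * ‖y‖ := this
    _ = K / R / R * (‖x‖ * ‖y‖) := by ring

theorem exists_norm_sub_le_mul_norm_mul_norm {lam mu : ℂ} {F : ℂ × ℂ → ℂ × ℂ}
    (hF : DifferentiableOn ℂ F (ball 0 1))
    (hsx : ∀ x : ℂ, ‖x‖ < 1 → F (x, 0) = (lam * x, 0))
    (hsy : ∀ y : ℂ, ‖y‖ < 1 → F (0, y) = (0, mu * y)) :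
    ∃ M, 0 ≤ M ∧ ∀ p ∈ ball (0 : ℂ × ℂ) (1 / 2),
      ‖F p - (lam * p.1, mu * p.2)‖ ≤ M * (‖p.1‖ * ‖p.2‖) := by
  set G : ℂ × ℂ → ℂ × ℂ := fun p => F p - (lam * p.1, mu * p.2)
  have hG : DifferentiableOn ℂ G (ball 0 1) :=
    hF.sub ((differentiable_fst.const_mul lam).prodMk
      (differentiable_snd.const_mul mu)).differentiableOn
  have hsub : closedBall (0 : ℂ × ℂ) (1 / 2) ⊆ ball 0 1 := closedBall_subset_ball (by norm_num)
  obtain ⟨K, hK⟩ := (isCompact_closedBall (0 : ℂ × ℂ) (1 / 2)).exists_bound_of_continuousOn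
    (hG.continuousOn.mono hsub)
  refine ⟨K / (1 / 2) / (1 / 2), ?_, fun p hp => ?_⟩
  · have := (norm_nonneg _).trans (hK 0 (mem_closedBall_self (by norm_num)))
    positivity
  refine norm_le_div_div_mul_of_eq_zero_on_axes (hG.mono (ball_subset_ball (by norm_num)))
    (fun x hx => ?_) (fun y hy => ?_)
    (fun q hq => mem_closedBall_zero_iff.2 (hK q (ball_subset_closedBall hq))) hp
  · simp [G, hsx x (by linarith)]
  · simp [G, hsy y (by linarith)]

theorem norm_fst_le_and_le_norm_snd_of_norm_sub_le {lam mu : ℂ} {M : ℝ} {p q : ℂ × ℂ}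
    (h : ‖q - (lam * p.1, mu * p.2)‖ ≤ M * (‖p.1‖ * ‖p.2‖)) :
    ‖q.1‖ ≤ (‖lam‖ + M * ‖p.2‖) * ‖p.1‖ ∧ (‖mu‖ - M * ‖p.1‖) * ‖p.2‖ ≤ ‖q.2‖ := by
  have h1 : ‖q.1 - lam * p.1‖ ≤ M * (‖p.1‖ * ‖p.2‖) := (norm_fst_le _).trans h
  have h2 : ‖q.2 - mu * p.2‖ ≤ M * (‖p.1‖ * ‖p.2‖) := (norm_snd_le _).trans h
  have t1 := norm_le_norm_add_norm_sub' q.1 (lam * p.1)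
  have t2 := norm_le_norm_add_norm_sub' (mu * p.2) q.2
  rw [norm_sub_rev] at t2
  rw [norm_mul] at t1 t2
  constructor <;> nlinarith

theorem le_pow_mul_exp_of_succ_le_mul_one_add {u : ℕ → ℝ} {ρ c θ : ℝ} {n : ℕ} (hρ : 0 ≤ ρ)
    (hc : 0 ≤ c) (hθ0 : 0 ≤ θ) (hθ1 : θ < 1) (hu0 : 0 ≤ u 0)
    (hu : ∀ j < n, u (j + 1) ≤ ρ * (1 + c * θ ^ (n - 1 - j)) * u j) {j : ℕ} (hj : j ≤ n) :
    u j ≤ ρ ^ j * exp (c / (1 - θ)) * u 0 := by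
  -- the exponent telescopes: `c θ^(i+1) / (1 - θ) + c θ^i = c θ^i / (1 - θ)`
  have key : ∀ j ≤ n, u j ≤ ρ ^ j * exp (c * θ ^ (n - j) / (1 - θ)) * u 0 := by
    intro j hj
    induction j with
    | zero =>
      have : 1 ≤ exp (c * θ ^ (n - 0) / (1 - θ)) := one_le_exp (by positivity)
      simpa using le_mul_of_one_le_left hu0 this
    | succ j ih =>
      obtain ⟨i, rfl⟩ : ∃ i, n = j + 1 + i := ⟨n - (j + 1), by omega⟩
      have hi : j + 1 + i - 1 - j = i := by omega
      have hi' : j + 1 + i - j = i + 1 := by omega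
      have htel : c * θ ^ (i + 1) / (1 - θ) + c * θ ^ i = c * θ ^ i / (1 - θ) := by
        field_simp [(sub_pos.2 hθ1).ne']
        ring
      calc u (j + 1) ≤ ρ * (1 + c * θ ^ i) * u j := hi ▸ hu j (by omega)
        _ ≤ ρ * (1 + c * θ ^ i) * (ρ ^ j * exp (c * θ ^ (i + 1) / (1 - θ)) * u 0) := by
          gcongr
          exact hi' ▸ ih (by omega)
        _ ≤ ρ * exp (c * θ ^ i) * (ρ ^ j * exp (c * θ ^ (i + 1) / (1 - θ)) * u 0) := by
          gcongr
          linarith [add_one_le_exp (c * θ ^ i)]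
        _ = ρ ^ (j + 1) * exp (c * θ ^ (j + 1 + i - (j + 1)) / (1 - θ)) * u 0 := by
          rw [Nat.add_sub_cancel_left, ← htel, exp_add]; ring
  calc u j ≤ ρ ^ j * exp (c * θ ^ (n - j) / (1 - θ)) * u 0 := key j hj
    _ ≤ ρ ^ j * exp (c / (1 - θ)) * u 0 := by
      gcongr
      exact mul_le_of_le_one_right hc (pow_le_one₀ hθ0 hθ1.le)

theorem inv_sub_le_inv_mul_one_add {m t : ℝ} (ht : 0 ≤ t) (h : 1 ≤ m - t) :
    (m - t)⁻¹ ≤ m⁻¹ * (1 + t) := by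
  rw [← div_eq_inv_mul, inv_eq_one_div, div_le_div_iff₀ (by linarith) (by linarith)]
  nlinarith

section Recursion

variable {ℓ m M r s θ : ℝ} {n k : ℕ} {a b : ℕ → ℝ}

theorem le_pow_mul_of_succ_le_add_mul (hℓ : 0 ≤ ℓ) (hM : 0 ≤ M) (hr : 0 ≤ r) (ha0 : ∀ k, 0 ≤ a k)
    (hbr : ∀ k ≤ n, b k ≤ r) (ha : ∀ k < n, a (k + 1) ≤ (ℓ + M * b k) * a k) (hk : k ≤ n) :
    a k ≤ (ℓ + M * r) ^ k * a 0 :=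
  le_geom (by positivity) k fun j hj =>
    (ha j (by omega)).trans (by gcongr; exacts [ha0 j, hbr j (by omega)])

theorem le_inv_pow_mul_of_sub_mul_mul_le_succ (hb0 : ∀ k, 0 ≤ b k)
    (har : ∀ k ≤ n, a k ≤ r) (hU : 0 < m - M * r) (hM : 0 ≤ M)
    (hb : ∀ k < n, (m - M * a k) * b k ≤ b (k + 1)) (hk : k ≤ n) :
    b k ≤ (m - M * r)⁻¹ ^ (n - k) * b n := by
  have step : ∀ j < n - k, b (n - (j + 1)) ≤ (m - M * r)⁻¹ * b (n - j) := by
    intro j hj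
    set i := n - (j + 1)
    have hi : i + 1 = n - j := by omega
    rw [le_inv_mul_iff₀ hU, ← hi]
    calc (m - M * r) * b i ≤ (m - M * a i) * b i := by
          gcongr
          · exact hb0 i
          · exact har i (by omega)
      _ ≤ b (i + 1) := hb i (by omega)
  simpa [Nat.sub_sub_self hk] using le_geom (u := fun j => b (n - j)) (by positivity) (n - k) step

theorem le_pow_mul_exp_of_succ_le_add_mul (hℓ : 0 < ℓ) (hM : 0 ≤ M) (hs : 0 ≤ s) (hθ0 : 0 ≤ θ)
    (hθ1 : θ < 1) (ha0 : ∀ k, 0 ≤ a k) (hb : ∀ k < n, b k ≤ s * θ ^ (n - 1 - k))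
    (ha : ∀ k < n, a (k + 1) ≤ (ℓ + M * b k) * a k) (hk : k ≤ n) :
    a k ≤ ℓ ^ k * exp (M * s / ℓ / (1 - θ)) * a 0 := by
  refine le_pow_mul_exp_of_succ_le_mul_one_add hℓ.le (by positivity) hθ0 hθ1 (ha0 0)
    (fun j hj => ?_) hk
  calc a (j + 1) ≤ (ℓ + M * b j) * a j := ha j hj
    _ ≤ (ℓ + M * (s * θ ^ (n - 1 - j))) * a j := by gcongr; exacts [ha0 j, hb j hj]
    _ = ℓ * (1 + M * s / ℓ * θ ^ (n - 1 - j)) * a j := by field_simp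

theorem le_inv_pow_mul_exp_of_sub_mul_mul_le_succ (hm : 0 < m) (hM : 0 ≤ M) (hs : 0 ≤ s)
    (hθ0 : 0 ≤ θ) (hθ1 : θ < 1) (ha0 : ∀ k, 0 ≤ a k) (hb0 : ∀ k, 0 ≤ b k)
    (has : ∀ k < n, a k ≤ s * θ ^ k)
    (hma : ∀ k < n, 1 ≤ m - M * a k) (hb : ∀ k < n, (m - M * a k) * b k ≤ b (k + 1))
    (hk : k ≤ n) :
    b k ≤ m⁻¹ ^ (n - k) * exp (M * s / (1 - θ)) * b n := by
  have step : ∀ j < n, b (n - (j + 1)) ≤ m⁻¹ * (1 + M * s * θ ^ (n - 1 - j)) * b (n - j) := by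
    intro j hj
    have hj' : n - (j + 1) + 1 = n - j := by omega
    have hi : n - 1 - j = n - (j + 1) := by omega
    set i := n - (j + 1)
    have hi_lt : i < n := by omega
    calc b i ≤ (m - M * a i)⁻¹ * b (i + 1) := by
          rw [le_inv_mul_iff₀ (by linarith [hma i hi_lt])]; exact hb i hi_lt
      _ ≤ m⁻¹ * (1 + M * a i) * b (i + 1) := by
          gcongr
          · exact hb0 _
          · exact inv_sub_le_inv_mul_one_add (by have := ha0 i; positivity) (hma i hi_lt)
      _ ≤ m⁻¹ * (1 + M * s * θ ^ (n - 1 - j)) * b (n - j) := by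
          rw [hi, hj', mul_assoc M]
          gcongr
          · exact hb0 _
          · exact has i hi_lt
  simpa [Nat.sub_sub_self hk] using le_pow_mul_exp_of_succ_le_mul_one_add (u := fun j => b (n - j))
    (inv_nonneg.2 hm.le) (by positivity) hθ0 hθ1 (hb0 n) step (Nat.sub_le n k)

theorem orbit_bounds (hℓ : 0 < ℓ) (hM : 0 ≤ M) (hr : 0 ≤ r) (hL : ℓ + M * r < 1)
    (hU : 1 < m - M * r) (ha0 : ∀ k, 0 ≤ a k) (hb0 : ∀ k, 0 ≤ b k) (har : ∀ k ≤ n, a k ≤ r)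
    (hbr : ∀ k ≤ n, b k ≤ r) (ha : ∀ k < n, a (k + 1) ≤ (ℓ + M * b k) * a k)
    (hb : ∀ k < n, (m - M * a k) * b k ≤ b (k + 1)) (hk : k ≤ n) :
    a k ≤ r * exp (M * r / ℓ / (1 - (m - M * r)⁻¹)) * ℓ ^ k ∧
      b k ≤ r * exp (M * r / (1 - (ℓ + M * r))) * (m ^ (n - k))⁻¹ := by
  have hq0 : 0 ≤ (m - M * r)⁻¹ := by positivity
  have hq1 : (m - M * r)⁻¹ < 1 := inv_lt_one_of_one_lt₀ hU
  have hb_geom : ∀ j < n, b j ≤ r * (m - M * r)⁻¹ ^ (n - 1 - j) := fun j hj =>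
    calc b j ≤ (m - M * r)⁻¹ ^ (n - j) * b n :=
          le_inv_pow_mul_of_sub_mul_mul_le_succ hb0 har (by linarith) hM hb hj.le
      _ ≤ (m - M * r)⁻¹ ^ (n - 1 - j) * r :=
          mul_le_mul (pow_le_pow_of_le_one hq0 hq1.le (by omega)) (hbr n le_rfl) (hb0 n)
            (pow_nonneg hq0 _)
      _ = r * (m - M * r)⁻¹ ^ (n - 1 - j) := mul_comm _ _
  have ha_geom : ∀ j < n, a j ≤ r * (ℓ + M * r) ^ j := fun j hj =>
    calc a j ≤ (ℓ + M * r) ^ j * a 0 := le_pow_mul_of_succ_le_add_mul hℓ.le hM hr ha0 hbr ha hj.le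
      _ ≤ (ℓ + M * r) ^ j * r := by gcongr; exact har 0 (Nat.zero_le n)
      _ = r * (ℓ + M * r) ^ j := mul_comm _ _
  have hm : 0 < m := by nlinarith
  have hma : ∀ j < n, 1 ≤ m - M * a j := fun j hj => by
    have := har j hj.le
    nlinarith
  constructor
  · calc a k ≤ ℓ ^ k * exp (M * r / ℓ / (1 - (m - M * r)⁻¹)) * a 0 :=
          le_pow_mul_exp_of_succ_le_add_mul hℓ hM hr hq0 hq1 ha0 hb_geom ha hk
      _ ≤ ℓ ^ k * exp (M * r / ℓ / (1 - (m - M * r)⁻¹)) * r := by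
          gcongr; exact har 0 (Nat.zero_le n)
      _ = _ := by ring
  · calc b k ≤ m⁻¹ ^ (n - k) * exp (M * r / (1 - (ℓ + M * r))) * b n :=
          le_inv_pow_mul_exp_of_sub_mul_mul_le_succ hm hM hr (by positivity) hL ha0 hb0
            ha_geom hma hb hk
      _ ≤ m⁻¹ ^ (n - k) * exp (M * r / (1 - (ℓ + M * r))) * r := by
          gcongr; exact hbr n le_rfl
      _ = _ := by rw [inv_pow]; ring

end Recursion

/-- Lemma 3.2. For a holomorphic map in semi-linearizing coordinates on
the unit polydisk, orbits staying in a (shrunken) polydisk of radius `r` for `n` steps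
satisfy `x_k = O(|λ|^k)` and `y_k = O(|μ|^{-(n-k)})`, uniformly in `n`. -/
theorem stmt_10 (lam mu : ℂ) (hlam0 : 0 < ‖lam‖) (hlam1 : ‖lam‖ < 1) (hmu : 1 < ‖mu‖)
    (F : ℂ × ℂ → ℂ × ℂ)
    (hF : ∀ p : ℂ × ℂ, ‖p.1‖ < 1 → ‖p.2‖ < 1 → DifferentiableAt ℂ F p)
    (hsx : ∀ x : ℂ, ‖x‖ < 1 → F (x, 0) = (lam * x, 0))
    (hsy : ∀ y : ℂ, ‖y‖ < 1 → F (0, y) = (0, mu * y)) :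
    ∃ r : ℝ, 0 < r ∧ r < 1 ∧ ∃ C : ℝ, 0 < C ∧
      ∀ (n : ℕ) (p : ℕ → ℂ × ℂ),
        (∀ k, k ≤ n → ‖(p k).1‖ ≤ r ∧ ‖(p k).2‖ ≤ r) →
        (∀ k, k < n → p (k + 1) = F (p k)) →
        ∀ k, k ≤ n →
          ‖(p k).1‖ ≤ C * ‖lam‖ ^ k ∧ ‖(p k).2‖ ≤ C * (‖mu‖ ^ (n - k))⁻¹ := by
  have hF' : DifferentiableOn ℂ F (ball 0 1) := fun p hp =>
    (hF p (lt_of_le_of_lt (norm_fst_le p) (mem_ball_zero_iff.1 hp))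
      (lt_of_le_of_lt (norm_snd_le p) (mem_ball_zero_iff.1 hp))).differentiableWithinAt
  obtain ⟨M, hM, hFM⟩ := exists_norm_sub_le_mul_norm_mul_norm hF' hsx hsy
  obtain ⟨r, hr, hMr⟩ := exists_pos_mul_lt
    (lt_min (lt_min (sub_pos.2 hlam1) (sub_pos.2 hmu)) one_pos) (M + 2)
  rw [lt_min_iff, lt_min_iff] at hMr
  obtain ⟨⟨hMr_lam, hMr_mu⟩, hMr_one⟩ := hMr
  have hr2 : r < 1 / 2 := by nlinarith
  have hL : ‖lam‖ + M * r < 1 := by nlinarith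
  have hU : 1 < ‖mu‖ - M * r := by nlinarith
  refine ⟨r, hr, by linarith, r * max (exp (M * r / ‖lam‖ / (1 - (‖mu‖ - M * r)⁻¹)))
    (exp (M * r / (1 - (‖lam‖ + M * r)))), by positivity, fun n p hpr hpF k hk => ?_⟩
  have hstep : ∀ j < n, _ := fun j hj => norm_fst_le_and_le_norm_snd_of_norm_sub_le
    (hpF j hj ▸ hFM (p j) (mem_ball_zero_iff.2 (by
      rw [Prod.norm_def]
      exact max_lt ((hpr j hj.le).1.trans_lt hr2) ((hpr j hj.le).2.trans_lt hr2))))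
  obtain ⟨hx, hy⟩ := orbit_bounds hlam0 hM hr.le hL hU (fun _ => norm_nonneg _)
    (fun _ => norm_nonneg _) (fun j hj => (hpr j hj).1) (fun j hj => (hpr j hj).2)
    (fun j hj => (hstep j hj).1) (fun j hj => (hstep j hj).2) hk
  exact ⟨hx.trans (by gcongr; exact le_max_left _ _), hy.trans (by gcongr; exact le_max_right _ _)⟩
end
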